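/- On a locally finite weighted graph, for adjacent vertices x ~ y, the Ollivier curvature κ(x,y) = inf ∇_{xy}Δf can be computed by taking the infimum only over integer-valued 1-Lipschitz functions f on B_1(x) ∪ B_1(y) with f(y) - f(x) = 1. Consequently, on a combinatorial graph (all edge weights in {0,1} and m ≡ 1), κ(x,y) is an integer for all x ~ y. -/

import Mathlib

/-!
If `f` is `1`-Lipschitz with `f y - f x = 1`, then for every `θ` the function `⌊f + θ⌋` is
integer valued, `1`-Lipschitz and still increases by `1` from `x` to `y`; since
`∫₀¹ ⌊a + θ⌋ dθ = a`, its Laplacians at `x` and `y` average over `θ` to those of `f`, so some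
`θ` does at least as well as `f`. Conversely, an integer function that is `1`-Lipschitz on
`B_1(x) ∪ B_1(y)` extends (McShane's formula, truncated at `0`) to a finitely supported
`1`-Lipschitz function on `V`, and the Laplacians at `x` and `y` only see `B_1(x) ∪ B_1(y)`.
On a combinatorial graph the Laplacian of an integer function is an integer, and an infimum of
a bounded-below set of integers is attained.
-/

open scoped BigOperators

/-- A locally finite weighted graph. -/
structure WeightedGraph (V : Type) where
  w : V → V → ℝ
  m : V → ℝ
  symm : ∀ x y, w x y = w y x
  loopless : ∀ x, w x x = 0
  nonneg : ∀ x y, 0 ≤ w x y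
  mpos : ∀ x, 0 < m x
  locFin : ∀ x, Set.Finite {y | w x y ≠ 0}

namespace WeightedGraph

variable {V : Type} (G : WeightedGraph V)

/-- The underlying simple graph. -/
def toSimple : SimpleGraph V where
  Adj x y := x ≠ y ∧ G.w x y ≠ 0
  symm := by
    constructor
    intro x y h
    exact ⟨h.1.symm, by rw [G.symm y x]; exact h.2⟩
  loopless := by constructor; intro x h; exact h.1 rfl

/-- The combinatorial graph distance. -/
noncomputable def dist (x y : V) : ℕ := G.toSimple.dist x y

/-- The graph Laplacian. -/
noncomputable def lap (f : V → ℝ) (x : V) : ℝ :=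
  (∑ᶠ y, G.w x y * (f y - f x)) / G.m x

/-- The weighted vertex degree. -/
noncomputable def deg (x : V) : ℝ := (∑ᶠ y, G.w x y) / G.m x

/-- `f` is `1`-Lipschitz with respect to the combinatorial distance. -/
def Lip1 (f : V → ℝ) : Prop := ∀ x y, |f x - f y| ≤ (G.dist x y : ℝ)

/-- The Ollivier curvature, via the limit-free formula
`κ(x,y) = inf {∇_{xy} Δ f : f ∈ Lip(1) ∩ C_c(V), ∇_{yx} f = 1}`. -/
noncomputable def curv (x y : V) : ℝ :=
  sInf { c | ∃ f : V → ℝ, G.Lip1 f ∧ (Function.support f).Finite ∧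
    f y - f x = (G.dist x y : ℝ) ∧ c = (G.lap f x - G.lap f y) / (G.dist x y : ℝ) }

end WeightedGraph

open MeasureTheory

lemma Int.floor_sub_floor_le_of_sub_le {s t : ℝ} {n : ℤ} (h : s - t ≤ n) :
    ⌊s⌋ - ⌊t⌋ ≤ n := by
  have : ⌊s⌋ ≤ ⌊t⌋ + n := by
    rw [← Int.floor_add_intCast]
    exact Int.floor_le_floor (by linarith)
  omega

lemma exists_intCast_eq_sInf {S : Set ℝ} (hS : S ⊆ Set.range Int.cast) (hne : S.Nonempty)
    (hbdd : BddBelow S) : ∃ n : ℤ, sInf S = n := by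
  set T : Set ℤ := Int.cast ⁻¹' S
  have hTne : T.Nonempty := by
    obtain ⟨c, hc⟩ := hne
    obtain ⟨n, rfl⟩ := hS hc
    exact ⟨n, hc⟩
  have hTbdd : BddBelow T := by
    obtain ⟨b, hb⟩ := hbdd
    exact ⟨⌈b⌉, fun n hn => Int.ceil_le.mpr (hb hn)⟩
  refine ⟨sInf T, IsLeast.csInf_eq ⟨Int.csInf_mem hTne hTbdd, ?_⟩⟩
  rintro c hc
  obtain ⟨n, rfl⟩ := hS hc
  exact_mod_cast csInf_le hTbdd hc

lemma intervalIntegrable_floor_add (a s t : ℝ) :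
    IntervalIntegrable (fun θ : ℝ => (⌊a + θ⌋ : ℝ)) volume s t :=
  Monotone.intervalIntegrable fun _ _ h => by gcongr

lemma integral_fract_zero_one : ∫ t in (0 : ℝ)..1, Int.fract t = 1 / 2 := by
  rw [intervalIntegral.integral_of_le zero_le_one, integral_Ioc_eq_integral_Ioo,
    setIntegral_congr_fun measurableSet_Ioo (g := fun t => t)
      fun t ht => Int.fract_eq_self.mpr ⟨ht.1.le, ht.2⟩,
    ← integral_Ioc_eq_integral_Ioo, ← intervalIntegral.integral_of_le zero_le_one]
  norm_num

lemma integral_floor_add (a : ℝ) : ∫ θ in (0 : ℝ)..1, (⌊a + θ⌋ : ℝ) = a := by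
  have hfract : ∫ t in a..a + 1, Int.fract t = 1 / 2 := by
    rw [(Int.fract_periodic ℝ).intervalIntegral_add_eq a 0, zero_add, integral_fract_zero_one]
  have hsplit : ∫ t in a..a + 1, Int.fract t =
      (∫ t in a..a + 1, t) - ∫ t in a..a + 1, (⌊t⌋ : ℝ) :=
    intervalIntegral.integral_sub intervalIntegral.intervalIntegrable_id
      (by simpa using intervalIntegrable_floor_add 0 a (a + 1))
  rw [intervalIntegral.integral_comp_add_left (fun t => (⌊t⌋ : ℝ)), add_zero]
  rw [integral_id] at hsplit
  linarith

namespace WeightedGraph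

variable {V : Type} (G : WeightedGraph V)

noncomputable def nbr (x : V) : Finset V := (G.locFin x).toFinset

lemma mem_nbr {x z : V} : z ∈ G.nbr x ↔ G.w x z ≠ 0 := Set.Finite.mem_toFinset _

lemma adj_of_mem_nbr {x z : V} (h : z ∈ G.nbr x) : G.toSimple.Adj x z :=
  ⟨fun hxz => G.mem_nbr.mp h (hxz ▸ G.loopless x), G.mem_nbr.mp h⟩

lemma dist_of_mem_nbr {x z : V} (h : z ∈ G.nbr x) : G.dist x z = 1 :=
  SimpleGraph.dist_eq_one_iff_adj.mpr (G.adj_of_mem_nbr h)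

lemma dist_self (x : V) : G.dist x x = 0 := SimpleGraph.dist_self

lemma dist_comm (x y : V) : G.dist x y = G.dist y x := SimpleGraph.dist_comm

lemma lap_eq_sum (f : V → ℝ) (x : V) :
    G.lap f x = (∑ z ∈ G.nbr x, G.w x z * (f z - f x)) / G.m x := by
  rw [lap, finsum_eq_sum_of_support_subset]
  exact fun z hz => G.mem_nbr.mpr (left_ne_zero_of_mul hz)

lemma deg_eq_sum (x : V) : G.deg x = (∑ z ∈ G.nbr x, G.w x z) / G.m x := by
  rw [deg, finsum_eq_sum_of_support_subset]
  exact fun z hz => G.mem_nbr.mpr hz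

lemma lap_congr {f g : V → ℝ} {x : V} (hx : f x = g x) (hnbr : ∀ z ∈ G.nbr x, f z = g z) :
    G.lap f x = G.lap g x := by
  rw [lap_eq_sum, lap_eq_sum, hx, Finset.sum_congr rfl fun z hz => by rw [hnbr z hz]]

lemma lap_congr_of_eqOn_ball {f g : V → ℝ} {x : V} (h : ∀ u, G.dist x u ≤ 1 → f u = g u) :
    G.lap f x = G.lap g x :=
  G.lap_congr (h x (by simp [G.dist_self])) fun z hz => h z (G.dist_of_mem_nbr hz).le

lemma lap_add_const (f : V → ℝ) (c : ℝ) (x : V) :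
    G.lap (fun v => f v + c) x = G.lap f x := by
  simp only [lap, add_sub_add_right_eq_sub]

lemma abs_lap_le_deg {f : V → ℝ} (hf : G.Lip1 f) (x : V) : |G.lap f x| ≤ G.deg x := by
  rw [lap_eq_sum, deg_eq_sum, abs_div, abs_of_pos (G.mpos x)]
  refine div_le_div_of_nonneg_right ?_ (G.mpos x).le
  calc |∑ z ∈ G.nbr x, G.w x z * (f z - f x)|
      ≤ ∑ z ∈ G.nbr x, |G.w x z * (f z - f x)| := Finset.abs_sum_le_sum_abs _ _
    _ ≤ ∑ z ∈ G.nbr x, G.w x z := Finset.sum_le_sum fun z hz => by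
        rw [abs_mul, abs_of_nonneg (G.nonneg x z)]
        refine mul_le_of_le_one_right (G.nonneg x z) ?_
        simpa [G.dist_comm z x, G.dist_of_mem_nbr hz] using hf z x

lemma lip1_of_le {f : V → ℝ} (h : ∀ u v, f u ≤ f v + G.dist u v) : G.Lip1 f := fun u v =>
  abs_sub_le_iff.mpr ⟨by linarith [h u v], by rw [G.dist_comm]; linarith [h v u]⟩

lemma intervalIntegrable_lap_floor_add (f : V → ℝ) (x : V) :
    IntervalIntegrable (fun θ => G.lap (fun v => (⌊f v + θ⌋ : ℝ)) x) volume 0 1 := by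
  simp only [lap_eq_sum]
  refine IntervalIntegrable.div_const ?_ _
  simpa only [Finset.sum_fn] using IntervalIntegrable.sum (G.nbr x) fun z _ =>
    ((intervalIntegrable_floor_add _ _ _).sub (intervalIntegrable_floor_add _ _ _)).const_mul _

lemma integral_lap_floor_add (f : V → ℝ) (x : V) :
    ∫ θ in (0 : ℝ)..1, G.lap (fun v => (⌊f v + θ⌋ : ℝ)) x = G.lap f x := by
  simp only [lap_eq_sum]
  rw [intervalIntegral.integral_div, intervalIntegral.integral_finsetSum]
  · refine congrArg (· / G.m x) (Finset.sum_congr rfl fun z _ => ?_)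
    rw [intervalIntegral.integral_const_mul, intervalIntegral.integral_sub
      (intervalIntegrable_floor_add _ _ _) (intervalIntegrable_floor_add _ _ _),
      integral_floor_add, integral_floor_add]
  · exact fun z _ =>
      ((intervalIntegrable_floor_add _ _ _).sub (intervalIntegrable_floor_add _ _ _)).const_mul _

lemma exists_int_lip_lap_sub_le {x y : V} {f : V → ℝ} (hf : G.Lip1 f) (hfxy : f y - f x = 1) :
    ∃ g : V → ℤ, (∀ u v, |g u - g v| ≤ (G.dist u v : ℤ)) ∧ g y - g x = 1 ∧
      G.lap (fun v => (g v : ℝ)) x - G.lap (fun v => (g v : ℝ)) y ≤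
        G.lap f x - G.lap f y := by
  set Φ : ℝ → ℝ := fun θ =>
    G.lap (fun v => (⌊f v + θ⌋ : ℝ)) x - G.lap (fun v => (⌊f v + θ⌋ : ℝ)) y
  have hint : IntervalIntegrable Φ volume 0 1 :=
    (G.intervalIntegrable_lap_floor_add f x).sub (G.intervalIntegrable_lap_floor_add f y)
  have havg : ⨍ θ in Set.Ioc 0 1, Φ θ = G.lap f x - G.lap f y := by
    rw [setAverage_eq, ← intervalIntegral.integral_of_le zero_le_one,
      intervalIntegral.integral_sub (G.intervalIntegrable_lap_floor_add f x)
        (G.intervalIntegrable_lap_floor_add f y),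
      integral_lap_floor_add, integral_lap_floor_add]
    simp
  obtain ⟨θ, -, hθ⟩ := exists_le_setAverage (by simp) (by simp) hint.1
  refine ⟨fun v => ⌊f v + θ⌋, fun u v => abs_sub_le_iff.mpr ⟨?_, ?_⟩, ?_, havg ▸ hθ⟩
  · exact Int.floor_sub_floor_le_of_sub_le <| by
      push_cast; linarith [(abs_sub_le_iff.mp (hf u v)).1]
  · exact Int.floor_sub_floor_le_of_sub_le <| by
      push_cast; linarith [(abs_sub_le_iff.mp (hf u v)).2]
  · show ⌊f y + θ⌋ - ⌊f x + θ⌋ = 1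
    rw [show f y + θ = f x + θ + 1 by linarith, Int.floor_add_one]
    ring

lemma finite_setOf_dist_le (hconn : G.toSimple.Connected) (x : V) (n : ℕ) :
    {v | G.dist x v ≤ n}.Finite := by
  induction n generalizing x with
  | zero =>
    refine (Set.finite_singleton x).subset fun v hv => ?_
    exact ((hconn.dist_eq_zero_iff).mp (Nat.le_zero.mp hv)).symm
  | succ n ih =>
    refine ((Set.finite_singleton x).union
      ((G.nbr x).finite_toSet.biUnion fun z _ => ih z)).subset fun v hv => ?_
    obtain ⟨p, hp⟩ := hconn.exists_walk_length_eq_dist x v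
    cases p with
    | nil => exact Or.inl rfl
    | cons hxz q =>
      refine Or.inr (Set.mem_biUnion (G.mem_nbr.mpr hxz.2) ?_)
      have := SimpleGraph.dist_le q
      simp only [SimpleGraph.Walk.length_cons] at hp
      simp only [Set.mem_ofPred_eq, dist] at hv ⊢
      omega

lemma exists_lip1_finite_support_eqOn (hconn : G.toSimple.Connected) (B : Finset V)
    (h : V → ℝ) (h0 : ∀ u ∈ B, 0 ≤ h u)
    (hlip : ∀ u ∈ B, ∀ v ∈ B, h u - h v ≤ G.dist u v) :
    ∃ F : V → ℝ, G.Lip1 F ∧ (Function.support F).Finite ∧ ∀ v ∈ B, F v = h v := by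
  rcases B.eq_empty_or_nonempty with rfl | hB
  · exact ⟨0, fun u v => by simp, by simp, by simp⟩
  set M : V → ℝ := fun v => B.sup' hB fun u => h u - G.dist u v
  refine ⟨fun v => max 0 (M v), G.lip1_of_le fun v₁ v₂ => ?_, ?_, fun v hv => ?_⟩
  · have hM : M v₁ ≤ M v₂ + G.dist v₁ v₂ := Finset.sup'_le _ _ fun u hu => by
      have := Finset.le_sup' (fun u => h u - (G.dist u v₂ : ℝ)) hu
      have : (G.dist u v₂ : ℝ) ≤ G.dist u v₁ + G.dist v₁ v₂ := by
        exact_mod_cast hconn.dist_triangle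
      linarith
    exact max_le (by positivity) (hM.trans (by gcongr; exact le_max_right _ _))
  · refine (B.finite_toSet.biUnion fun u _ =>
      G.finite_setOf_dist_le hconn u ⌈h u⌉₊).subset fun v hv => ?_
    have hpos : 0 < M v := by
      rw [Function.mem_support] at hv
      contrapose! hv
      exact max_eq_left hv
    obtain ⟨u, hu, hMu⟩ := Finset.exists_mem_eq_sup' hB fun u => h u - (G.dist u v : ℝ)
    refine Set.mem_biUnion hu ?_
    have : (G.dist u v : ℝ) < ⌈h u⌉₊ := by
      linarith [Nat.le_ceil (h u), show 0 < M v from hpos, show M v = _ from hMu]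
    exact_mod_cast this.le
  · have hMv : M v = h v := le_antisymm
      (Finset.sup'_le _ _ fun u hu => by linarith [hlip u hu v hv])
      (by simpa [G.dist_self] using Finset.le_sup' (fun u => h u - (G.dist u v : ℝ)) hv)
    exact (congrArg _ hMv).trans (max_eq_right (h0 v hv))

def curvSet (x y : V) : Set ℝ :=
  { c | ∃ f : V → ℝ, G.Lip1 f ∧ (Function.support f).Finite ∧
    f y - f x = (G.dist x y : ℝ) ∧ c = (G.lap f x - G.lap f y) / (G.dist x y : ℝ) }

def intCurvSet (x y : V) : Set ℝ :=
  { c : ℝ | ∃ f : V → ℤ,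
    (∀ u v, (G.dist x u ≤ 1 ∨ G.dist y u ≤ 1) → (G.dist x v ≤ 1 ∨ G.dist y v ≤ 1) →
      |f u - f v| ≤ (G.dist u v : ℤ)) ∧
    f y - f x = 1 ∧
    c = G.lap (fun v => (f v : ℝ)) x - G.lap (fun v => (f v : ℝ)) y }

def IsCombinatorial : Prop := (∀ u v, G.w u v = 0 ∨ G.w u v = 1) ∧ ∀ v, G.m v = 1

lemma curv_eq_sInf_curvSet (x y : V) : G.curv x y = sInf (G.curvSet x y) := rfl

lemma bddBelow_curvSet (x y : V) : BddBelow (G.curvSet x y) := by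
  refine ⟨-(G.deg x + G.deg y) / G.dist x y, ?_⟩
  rintro c ⟨f, hf, -, -, rfl⟩
  have hx := abs_le.mp (G.abs_lap_le_deg hf x)
  have hy := abs_le.mp (G.abs_lap_le_deg hf y)
  exact div_le_div_of_nonneg_right (by linarith) (Nat.cast_nonneg _)

lemma intCurvSet_nonempty (hconn : G.toSimple.Connected) {x y : V} (hxy : x ≠ y) :
    (G.intCurvSet x y).Nonempty := by
  classical
  refine ⟨_, fun v => if v = y then 1 else 0, fun u v _ _ => ?_, by simp [hxy], rfl⟩
  rcases eq_or_ne u v with rfl | huv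
  · simp
  · have : 0 < G.dist u v := hconn.pos_dist_of_ne huv
    dsimp only
    split_ifs <;> simp <;> omega

lemma intCurvSet_subset_curvSet (hconn : G.toSimple.Connected) {x y : V}
    (hxy : G.dist x y = 1) : G.intCurvSet x y ⊆ G.curvSet x y := by
  rintro c ⟨f, hf, hfxy, rfl⟩
  have hB : ({u | G.dist x u ≤ 1} ∪ {u | G.dist y u ≤ 1}).Finite :=
    (G.finite_setOf_dist_le hconn x 1).union (G.finite_setOf_dist_le hconn y 1)
  set B := hB.toFinset
  have hmemB {u : V} : u ∈ B ↔ G.dist x u ≤ 1 ∨ G.dist y u ≤ 1 := by simp [B]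
  have hxB : x ∈ B := hmemB.mpr (Or.inl (by simp [G.dist_self]))
  have hyB : y ∈ B := hmemB.mpr (Or.inr (by simp [G.dist_self]))
  have hdx {u : V} (hu : u ∈ B) : (G.dist x u : ℤ) ≤ 2 := by
    have : G.dist x u ≤ G.dist x y + G.dist y u := hconn.dist_triangle
    rcases hmemB.mp hu with h | h <;> omega
  -- `h ≥ 0` on `B` because `f x - f u ≤ 2` there; a constant shift changes neither `Δ`
  -- nor `f y - f x`
  set h : V → ℝ := fun v => (f v : ℝ) + (2 - f x)
  obtain ⟨F, hF, hsupp, hFB⟩ := G.exists_lip1_finite_support_eqOn hconn B h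
    (fun u hu => by
      have := (abs_le.mp (hf x u (hmemB.mp hxB) (hmemB.mp hu))).2
      have : (0 : ℤ) ≤ f u + (2 - f x) := by linarith [hdx hu]
      simp only [h]
      exact_mod_cast this)
    (fun u hu v hv => by
      have := (abs_le.mp (hf u v (hmemB.mp hu) (hmemB.mp hv))).2
      simp only [h, add_sub_add_right_eq_sub]
      exact_mod_cast this)
  have hlapx : G.lap F x = G.lap (fun v => (f v : ℝ)) x := by
    rw [G.lap_congr_of_eqOn_ball fun u hu => hFB u (hmemB.mpr (Or.inl hu)), G.lap_add_const]
  have hlapy : G.lap F y = G.lap (fun v => (f v : ℝ)) y := by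
    rw [G.lap_congr_of_eqOn_ball fun u hu => hFB u (hmemB.mpr (Or.inr hu)), G.lap_add_const]
  refine ⟨F, hF, hsupp, ?_, by rw [hlapx, hlapy, hxy, Nat.cast_one, div_one]⟩
  rw [hFB y hyB, hFB x hxB, hxy]
  simp only [h, add_sub_add_right_eq_sub]
  exact_mod_cast hfxy

lemma exists_intCurvSet_le {x y : V} (hxy : G.dist x y = 1) {c : ℝ} (hc : c ∈ G.curvSet x y) :
    ∃ c' ∈ G.intCurvSet x y, c' ≤ c := by
  obtain ⟨f, hf, -, hfxy, rfl⟩ := hc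
  rw [hxy, Nat.cast_one] at hfxy ⊢
  obtain ⟨g, hg, hgxy, hle⟩ := G.exists_int_lip_lap_sub_le hf hfxy
  exact ⟨_, ⟨g, fun u v _ _ => hg u v, hgxy, rfl⟩, by rwa [div_one]⟩

lemma curv_eq_sInf_intCurvSet (hconn : G.toSimple.Connected) {x y : V}
    (hadj : G.toSimple.Adj x y) : G.curv x y = sInf (G.intCurvSet x y) := by
  have hxy : G.dist x y = 1 := SimpleGraph.dist_eq_one_iff_adj.mpr hadj
  have hsub := G.intCurvSet_subset_curvSet hconn hxy
  have hne := G.intCurvSet_nonempty hconn hadj.ne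
  rw [curv_eq_sInf_curvSet]
  refine le_antisymm (csInf_le_csInf (G.bddBelow_curvSet x y) hne hsub)
    (le_csInf (hne.mono hsub) fun c hc => ?_)
  obtain ⟨c', hc', hle⟩ := G.exists_intCurvSet_le hxy hc
  exact (csInf_le ((G.bddBelow_curvSet x y).mono hsub) hc').trans hle

lemma lap_intCast_of_isCombinatorial (hG : G.IsCombinatorial) (f : V → ℤ) (x : V) :
    G.lap (fun v => (f v : ℝ)) x = ((∑ z ∈ G.nbr x, (f z - f x) : ℤ) : ℝ) := by
  rw [lap_eq_sum, hG.2 x, div_one]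
  push_cast
  exact Finset.sum_congr rfl fun z hz => by rw [(hG.1 x z).resolve_left (G.mem_nbr.mp hz), one_mul]

lemma intCurvSet_subset_range_intCast (hG : G.IsCombinatorial) (x y : V) :
    G.intCurvSet x y ⊆ Set.range Int.cast := by
  rintro c ⟨f, -, -, rfl⟩
  rw [G.lap_intCast_of_isCombinatorial hG, G.lap_intCast_of_isCombinatorial hG]
  exact ⟨_, Int.cast_sub _ _⟩

lemma exists_int_curv_eq_of_isCombinatorial (hconn : G.toSimple.Connected) {x y : V}
    (hadj : G.toSimple.Adj x y) (hG : G.IsCombinatorial) : ∃ n : ℤ, G.curv x y = n := by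
  have hsub := G.intCurvSet_subset_curvSet hconn (SimpleGraph.dist_eq_one_iff_adj.mpr hadj)
  rw [G.curv_eq_sInf_intCurvSet hconn hadj]
  exact exists_intCast_eq_sInf (G.intCurvSet_subset_range_intCast hG x y)
    (G.intCurvSet_nonempty hconn hadj.ne) ((G.bddBelow_curvSet x y).mono hsub)

end WeightedGraph

theorem stmt1_general {V : Type} (G : WeightedGraph V)
    (hconn : G.toSimple.Connected) (x y : V) (hadj : G.toSimple.Adj x y) :
    (G.curv x y = sInf { c : ℝ | ∃ f : V → ℤ,
        (∀ u v, (G.dist x u ≤ 1 ∨ G.dist y u ≤ 1) → (G.dist x v ≤ 1 ∨ G.dist y v ≤ 1) →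
          |f u - f v| ≤ (G.dist u v : ℤ)) ∧
        f y - f x = 1 ∧
        c = G.lap (fun v => (f v : ℝ)) x - G.lap (fun v => (f v : ℝ)) y }) ∧
    ((∀ u v, G.w u v = 0 ∨ G.w u v = 1) → (∀ v, G.m v = 1) →
      ∃ n : ℤ, G.curv x y = (n : ℝ)) :=
  ⟨G.curv_eq_sInf_intCurvSet hconn hadj, fun hw hm =>
    G.exists_int_curv_eq_of_isCombinatorial hconn hadj ⟨hw, hm⟩⟩

/-- For adjacent vertices, the Ollivier curvature is computed by taking the infimum over
integer-valued 1-Lipschitz functions on `B_1(x) ∪ B_1(y)` with `f(y) - f(x) = 1`; consequently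
on a combinatorial graph the curvature of adjacent vertices is an integer. -/
theorem stmt1 {V : Type} [Countable V] (G : WeightedGraph V)
    (hconn : G.toSimple.Connected) (x y : V) (hadj : G.toSimple.Adj x y) :
    (G.curv x y = sInf { c : ℝ | ∃ f : V → ℤ,
        (∀ u v, (G.dist x u ≤ 1 ∨ G.dist y u ≤ 1) → (G.dist x v ≤ 1 ∨ G.dist y v ≤ 1) →
          |f u - f v| ≤ (G.dist u v : ℤ)) ∧
        f y - f x = 1 ∧
        c = G.lap (fun v => (f v : ℝ)) x - G.lap (fun v => (f v : ℝ)) y }) ∧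
    ((∀ u v, G.w u v = 0 ∨ G.w u v = 1) → (∀ v, G.m v = 1) →
      ∃ n : ℤ, G.curv x y = (n : ℝ)) :=
  stmt1_general G hconn x y hadj
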